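/- arXiv:1609.00298 — 3 statements merged into one kernel-verified Lean document; each statement's English description precedes it below -/
import Mathlib

section
/- Let u be a positive integer and let A(n), B(n) be integer-valued processes whose increments always belong to {u, −1}. Then ∑_{i=0}^{n} 1{A(i)=B(i)} ≤ |A(n+1)−B(n+1)| − |A(0)−B(0)| − ∑_{i=0}^{n} sgn(A(i)−B(i))·ΔA(i) + ∑_{i=0}^{n} sgn(A(i+1)−B(i))·ΔB(i), where ΔF(i)=F(i+1)−F(i) and sgn(0)=0. -/
/-!
Each summand telescopes into a one-step inequality, and the step splits into a move of `A`
against the old `B` and a move of `B` against the new `A`. Both halves are instances of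
`|x| - sign x * y ≤ |x - y|`; only at a meeting point `a = b` does the `A`-half lose the sign
term, and there it gains `|a' - a| ≥ 1` because `A` never stands still.
-/

theorem Int.sign_mul_le_abs (y x : ℤ) : y.sign * x ≤ |x| := by
  rcases Int.sign_trichotomy y with h | h | h <;> rw [h]
  · simp [le_abs_self]
  · simp
  · simp [neg_le_abs]

theorem Int.abs_sub_sign_mul_le_abs_sub (x y : ℤ) : |x| - x.sign * y ≤ |x - y| := by
  have := x.sign_mul_le_abs (x - y)
  rw [mul_sub, Int.sign_mul_self_eq_abs] at this
  exact this

theorem tanaka_step {a a' : ℤ} (hmove : a' ≠ a) (b b' : ℤ) :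
    (if a = b then (1 : ℤ) else 0)
      ≤ |a' - b'| - |a - b| - (a - b).sign * (a' - a) + (a' - b).sign * (b' - b) := by
  have hb : |a' - b| - (a' - b).sign * (b' - b) ≤ |a' - b'| := by
    simpa using (a' - b).abs_sub_sign_mul_le_abs_sub (b' - b)
  split_ifs with hab
  · subst hab
    have hjump : 0 < |a' - a| := abs_pos.2 (sub_ne_zero.2 hmove)
    simp only [sub_self, abs_zero, Int.sign_zero, zero_mul]
    linarith
  · have ha : |a - b| - (a - b).sign * (a - a') ≤ |a' - b| := by
      simpa using (a - b).abs_sub_sign_mul_le_abs_sub (a - a')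
    linarith [show (a - b).sign * (a - a') = -((a - b).sign * (a' - a)) by ring]

theorem tanaka_general (u : ℤ) (hu : 1 ≤ u) (A B : ℕ → ℤ)
    (hA : ∀ n, A (n + 1) - A n = u ∨ A (n + 1) - A n = -1) (n : ℕ) :
    (∑ i ∈ Finset.range (n + 1), if A i = B i then (1 : ℤ) else 0)
      ≤ |A (n + 1) - B (n + 1)| - |A 0 - B 0|
        - (∑ i ∈ Finset.range (n + 1), Int.sign (A i - B i) * (A (i + 1) - A i))
        + ∑ i ∈ Finset.range (n + 1), Int.sign (A (i + 1) - B i) * (B (i + 1) - B i) := by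
  have hA_ne (i : ℕ) : A (i + 1) ≠ A i := by
    rcases hA i with h | h <;> omega
  calc (∑ i ∈ Finset.range (n + 1), if A i = B i then (1 : ℤ) else 0)
      ≤ ∑ i ∈ Finset.range (n + 1), (|A (i + 1) - B (i + 1)| - |A i - B i|
          - (A i - B i).sign * (A (i + 1) - A i) + (A (i + 1) - B i).sign * (B (i + 1) - B i)) :=
        Finset.sum_le_sum fun i _ => tanaka_step (hA_ne i) (B i) (B (i + 1))
    _ = _ := by
        rw [Finset.sum_add_distrib, Finset.sum_sub_distrib,
          Finset.sum_range_sub fun i => |A i - B i|]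

/-- Discrete Tanaka formula: if `A` and `B` are integer-valued processes whose increments
always belong to `{u, -1}` with `u ≥ 1`, then
`∑_{i=0}^{n} 1{A i = B i} ≤ |A(n+1)−B(n+1)| − |A 0 − B 0|
  − ∑_{i=0}^{n} sgn(A i − B i)·ΔA i + ∑_{i=0}^{n} sgn(A (i+1) − B i)·ΔB i`. -/
theorem tanaka (u : ℤ) (hu : 1 ≤ u) (A B : ℕ → ℤ)
    (hA : ∀ n, A (n + 1) - A n = u ∨ A (n + 1) - A n = -1)
    (hB : ∀ n, B (n + 1) - B n = u ∨ B (n + 1) - B n = -1) (n : ℕ) :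
    (∑ i ∈ Finset.range (n + 1), if A i = B i then (1 : ℤ) else 0)
      ≤ |A (n + 1) - B (n + 1)| - |A 0 - B 0|
        - (∑ i ∈ Finset.range (n + 1), Int.sign (A i - B i) * (A (i + 1) - A i))
        + ∑ i ∈ Finset.range (n + 1), Int.sign (A (i + 1) - B i) * (B (i + 1) - B i) :=
  tanaka_general u hu A B hA n
end

section
/- The Lebesgue measure of the set of jump-time vectors for d non-intersecting up/right paths from starting points (0,i) to endpoints (t, M−d+i), 1 ≤ i ≤ d, equals t^{(M−d)d} · ∏_{i=0}^{d−1} i! / (M−d+i)!. -/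
open MeasureTheory

/-- The position at time `s` of the `i`-th up/right path (started at height `i+1`)
with jump times `τ i : Fin c → ℝ`: the starting height plus the number of jumps
made up to time `s`. -/
noncomputable def pathPos {d c : ℕ} (τ : Fin d → Fin c → ℝ) (i : Fin d) (s : ℝ) : ℕ :=
  (i : ℕ) + 1 + Nat.card {j : Fin c // τ i j ≤ s}

/-- The set of jump-time vectors of `d`-tuples of non-intersecting up/right paths,
where path `i` starts at height `i+1` at time `0`, makes `M−d` jumps at strictly
increasing times in `(0,t)` (thus ending at height `M−d+i+1` at time `t`), and the
paths are strictly ordered at all intermediate times. -/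
def nonintersectingJumpTimes (d M : ℕ) (t : ℝ) :
    Set (Fin d → Fin (M - d) → ℝ) :=
  {τ | (∀ i, StrictMono (τ i)) ∧ (∀ i j, τ i j ∈ Set.Ioo 0 t) ∧
    ∀ i i' : Fin d, i < i' → ∀ s ∈ Set.Ioo 0 t, pathPos τ i s < pathPos τ i' s}

/-!
Off the null set where two jump times coincide, `d` paths with increasing jump times are
non-intersecting exactly when, for every `i` and `k`, the `k`-th jump of path `i + 1` comes before
the `k`-th jump of path `i`. So, up to a null set, the jump-time set is the order polytope in
`(0, t)^{d × c}`, `c = M - d`, of the poset of cells of a `d × c` rectangle.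

The cube `(0, t)^n` is tiled, up to null sets, by `n!` congruent simplices
`{x_{u 0} < ⋯ < x_{u (n-1)}}`, so each has volume `t^n / n!`, and an order polytope is the union
of the simplices whose orderings `u` are linear extensions of the poset.

For a shape with `m` cells and rows `l 0 ≤ ⋯ ≤ l (d-1)`, the number `f^l` of linear extensions
satisfies the Frobenius formula `f^l · ∏ (l_i + i)! = m! · Δ(l_i + i)`, `Δ` the Vandermonde
determinant. The proof removes a maximal cell, and the inductive step is the identity
`∑_i x_i ∏_{j ≠ i} (x_i - 1 - x_j) / (x_i - x_j) = ∑_i x_i - C(d, 2)`, a consequence of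
Lagrange interpolation. For the rectangle the formula gives `f = (dc)! ∏ i! / (c + i)!`.
-/

open Finset Function

section KeyIdentity

open Polynomial

variable {ι K : Type*}

theorem Lagrange.sum_mul_eval_div_prod_sub [Field K] [DecidableEq ι] {s : Finset ι} {v : ι → K}
    (hvs : Set.InjOn v s) {g : K[X]} (hg : g.degree < #s) :
    ∑ i ∈ s, v i * g.eval (v i) / ∏ j ∈ s.erase i, (v i - v j)
      = (X * g).coeff (#s - 1) + (∑ i ∈ s, v i) * g.coeff (#s - 1) := by
  rcases s.eq_empty_or_nonempty with rfl | hs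
  · simp_all
  obtain ⟨n, hn⟩ : ∃ n, #s = n + 1 := ⟨#s - 1, by have := hs.card_pos; omega⟩
  set c := g.coeff n
  -- subtracting `c * nodal` kills the top coefficient of `X * g` and does not change its values
  -- at the nodes
  have hdeg : (X * g - C c * Lagrange.nodal s v).degree < (#s : WithBot ℕ) := by
    rw [degree_lt_iff_coeff_zero]
    intro m hm
    obtain ⟨k, rfl⟩ : ∃ k, m = k + 1 := ⟨m - 1, by omega⟩
    rw [coeff_sub, coeff_X_mul, coeff_C_mul]
    rcases (show n ≤ k by omega).eq_or_lt with rfl | hnk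
    · rw [← hn, ← Lagrange.natDegree_nodal (v := v), Lagrange.nodal_monic.coeff_natDegree,
        mul_one, sub_self]
    · rw [coeff_eq_zero_of_degree_lt (hg.trans_le (by exact_mod_cast (by omega : #s ≤ k))),
        coeff_eq_zero_of_natDegree_lt (by rw [Lagrange.natDegree_nodal]; omega), mul_zero,
        sub_zero]
  have hnodal : (Lagrange.nodal s v).coeff n = -∑ i ∈ s, v i := by
    rw [Lagrange.nodal_eq, ← prod_X_sub_C_coeff_card_pred s v hs.card_pos, hn, Nat.add_sub_cancel]
  have heval : ∀ i ∈ s, (X * g - C c * Lagrange.nodal s v).eval (v i) = v i * g.eval (v i) := by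
    intro i hi
    simp [Lagrange.eval_nodal_at_node hi]
  rw [← sum_congr rfl fun i hi => by rw [← heval i hi], ← Lagrange.coeff_eq_sum hvs hdeg, hn,
    Nat.add_sub_cancel, coeff_sub, coeff_C_mul, hnodal]
  ring

theorem two_mul_coeff_prod_X_sub_C_card_sub_two [CommRing K] [DecidableEq ι] (s : Finset ι)
    (f : ι → K) (hs : 2 ≤ #s) :
    2 * (∏ i ∈ s, (X - C (f i))).coeff (#s - 2)
      = (∑ i ∈ s, f i) ^ 2 - ∑ i ∈ s, f i ^ 2 := by
  induction s using Finset.induction_on with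
  | empty => simp at hs
  | @insert a s ha ih =>
    rw [card_insert_of_notMem ha] at hs ⊢
    rw [prod_insert ha, sum_insert ha, sum_insert ha, mul_comm (X - C (f a))]
    obtain hs2 | hs1 := (show 2 ≤ #s ∨ #s = 1 by omega)
    · obtain ⟨k, hk⟩ : ∃ k, #s = k + 2 := ⟨#s - 2, by omega⟩
      have h1 := prod_X_sub_C_coeff_card_pred s f (by omega)
      have h2 := ih hs2
      rw [hk, show k + 2 - 1 = k + 1 from rfl] at h1
      rw [hk, Nat.add_sub_cancel] at h2
      rw [hk, show k + 2 + 1 - 2 = k + 1 from rfl, coeff_mul_X_sub_C, mul_sub, h2, h1]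
      ring
    · obtain ⟨b, rfl⟩ := card_eq_one.1 hs1
      simp [coeff_zero_eq_eval_zero]
      ring

theorem coeff_X_mul_nodal_sub_nodal_add_one [Field K] [NeZero (2 : K)] [DecidableEq ι]
    (s : Finset ι) (v : ι → K) :
    (X * (Lagrange.nodal s v - Lagrange.nodal s (v · + 1))).coeff (#s - 1)
      = -((#s - 1) * ∑ i ∈ s, v i + ((#s).choose 2 : K)) := by
  obtain hs | ⟨k, hk⟩ : #s ≤ 1 ∨ ∃ k, #s = k + 2 := by
    rcases le_or_gt #s 1 with h | h
    · exact .inl h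
    · exact .inr ⟨#s - 2, by omega⟩
  · interval_cases h : #s
    · simp [card_eq_zero.1 h]
    · simp
  have hP := two_mul_coeff_prod_X_sub_C_card_sub_two s v (by omega)
  have hQ := two_mul_coeff_prod_X_sub_C_card_sub_two s (v · + 1) (by omega)
  rw [hk, Nat.add_sub_cancel] at hP hQ
  simp only [sum_add_distrib, sum_const, hk, nsmul_one, add_sq, ← sum_mul, ← mul_sum] at hQ
  rw [Lagrange.nodal_eq, Lagrange.nodal_eq, hk, show k + 2 - 1 = k + 1 from rfl, coeff_X_mul,
    coeff_sub, Nat.cast_choose_two]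
  apply mul_left_cancel₀ (two_ne_zero : (2 : K) ≠ 0)
  push_cast at hQ ⊢
  field_simp
  linear_combination hP - hQ

theorem sum_mul_prod_sub_one_div_sub [Field K] [NeZero (2 : K)] [DecidableEq ι] {s : Finset ι}
    {v : ι → K} (hvs : Set.InjOn v s) :
    ∑ i ∈ s, v i * ∏ j ∈ s.erase i, (v i - 1 - v j) / (v i - v j)
      = ∑ i ∈ s, v i - ((#s).choose 2 : K) := by
  rcases s.eq_empty_or_nonempty with rfl | hs
  · simp
  set P := Lagrange.nodal s v
  set Q := Lagrange.nodal s (v · + 1)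
  have heval : ∀ i ∈ s, (P - Q).eval (v i) = ∏ j ∈ s.erase i, (v i - 1 - v j) := by
    intro i hi
    rw [eval_sub, Lagrange.eval_nodal_at_node hi, Lagrange.eval_nodal, ← mul_prod_erase s _ hi]
    simp only [sub_add_cancel_left, neg_one_mul, zero_sub, neg_neg]
    exact prod_congr rfl fun j _ => by ring
  have hdeg : (P - Q).degree < #s := by
    rw [← Lagrange.degree_nodal (s := s) (v := v)]
    refine degree_sub_lt_left (by rw [Lagrange.degree_nodal, Lagrange.degree_nodal])
      Lagrange.nodal_ne_zero ?_
    rw [Lagrange.nodal_monic.leadingCoeff, Lagrange.nodal_monic.leadingCoeff]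
  have hcoeff : (P - Q).coeff (#s - 1) = #s := by
    simp only [coeff_sub, P, Q, Lagrange.nodal_eq]
    rw [prod_X_sub_C_coeff_card_pred _ _ hs.card_pos, prod_X_sub_C_coeff_card_pred _ _ hs.card_pos,
      sum_add_distrib, sum_const, nsmul_one]
    ring
  calc ∑ i ∈ s, v i * ∏ j ∈ s.erase i, (v i - 1 - v j) / (v i - v j)
      = ∑ i ∈ s, v i * (P - Q).eval (v i) / ∏ j ∈ s.erase i, (v i - v j) :=
        sum_congr rfl fun i hi => by rw [heval i hi, prod_div_distrib, mul_div_assoc]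
    _ = ∑ i ∈ s, v i - ((#s).choose 2 : K) := by
        rw [Lagrange.sum_mul_eval_div_prod_sub hvs hdeg, hcoeff,
          coeff_X_mul_nodal_sub_nodal_add_one]
        ring

end KeyIdentity

section Vandermonde

open Matrix

variable {R : Type*} [CommRing R] {n : ℕ}

theorem Fin.prod_filter_lt_eq_prod_erase_mul {M : Type*} [CommMonoid M] (i₀ : Fin n)
    (F : Fin n × Fin n → M) :
    ∏ p : Fin n × Fin n with p.1 < p.2, F p
      = (∏ j ∈ univ.erase i₀, F (if i₀ < j then (i₀, j) else (j, i₀)))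
        * ∏ p : Fin n × Fin n with p.1 < p.2 ∧ p.1 ≠ i₀ ∧ p.2 ≠ i₀, F p := by
  rw [← prod_filter_mul_prod_filter_not _ (fun p => p.1 = i₀ ∨ p.2 = i₀), filter_filter,
    filter_filter]
  congr 1
  · refine prod_nbij' (fun p => if p.1 = i₀ then p.2 else p.1)
      (fun j => if i₀ < j then (i₀, j) else (j, i₀)) ?_ ?_ ?_ ?_ ?_ <;>
      · intro p
        simp only [mem_filter, mem_univ, true_and, mem_erase, ne_eq]
        split_ifs <;> grind
  · exact prod_congr (by ext; simp) fun _ _ => rfl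

theorem Matrix.det_vandermonde_update_mul (v : Fin n → R) (i₀ : Fin n) (z : R) :
    (vandermonde (update v i₀ z)).det * ∏ j ∈ univ.erase i₀, (v i₀ - v j)
      = (vandermonde v).det * ∏ j ∈ univ.erase i₀, (z - v j) := by
  have hpairs (w : Fin n → R) :
      (vandermonde w).det = ∏ p : Fin n × Fin n with p.1 < p.2, (w p.2 - w p.1) := by
    rw [det_vandermonde, prod_finset_product _ univ (fun i => Ioi i) (by simp)]
  have hrest : ∏ p : Fin n × Fin n with p.1 < p.2 ∧ p.1 ≠ i₀ ∧ p.2 ≠ i₀,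
        (update v i₀ z p.2 - update v i₀ z p.1)
      = ∏ p : Fin n × Fin n with p.1 < p.2 ∧ p.1 ≠ i₀ ∧ p.2 ≠ i₀, (v p.2 - v p.1) :=
    prod_congr rfl fun p hp => by
      simp only [mem_filter] at hp
      rw [update_of_ne hp.2.2.2, update_of_ne hp.2.2.1]
  rw [hpairs, hpairs, Fin.prod_filter_lt_eq_prod_erase_mul i₀,
    Fin.prod_filter_lt_eq_prod_erase_mul i₀, hrest, mul_right_comm, ← prod_mul_distrib,
    mul_right_comm _ _ (∏ j ∈ _, (z - v j)), ← prod_mul_distrib]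
  congr 1
  refine prod_congr rfl fun j hj => ?_
  have hj : j ≠ i₀ := ne_of_mem_erase hj
  split_ifs <;> simp [update_of_ne hj] <;> ring

theorem Matrix.det_vandermonde_add_id (r : R) :
    (vandermonde fun i : Fin n => r + i).det = ∏ i : Fin n, ((i : ℕ).factorial : R) := by
  rcases n with _ | n
  · simp
  simp_rw [add_comm r, det_vandermonde_add, det_vandermonde_id_eq_superFactorial,
    ← Nat.prod_range_succ_factorial, Nat.cast_prod,
    Fin.prod_univ_eq_prod_range (fun i => ((i.factorial : ℕ) : R))]

end Vandermonde

section LinearEnumeration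

variable {α : Type*} (r : α → α → Prop)

/-- For `S = univ` and a strict partial order `r`, these are the linear extensions of `r`. -/
def IsLinearEnumeration (S : Finset α) {m : ℕ} (u : Fin m → α) : Prop :=
  (∀ p, u p ∈ S) ∧ Injective u ∧ ∀ p q, r (u p) (u q) → p < q

noncomputable def numLinearEnumerations (S : Finset α) (m : ℕ) : ℕ :=
  Nat.card {u : Fin m → α // IsLinearEnumeration r S u}

variable {r} {S : Finset α} {m : ℕ}

theorem numLinearEnumerations_zero : numLinearEnumerations r S 0 = 1 :=
  Nat.card_eq_one_iff_unique.2 ⟨⟨fun _ _ => Subtype.ext (Subsingleton.elim _ _)⟩,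
    ⟨⟨finZeroElim, fun p => p.elim0, fun p => p.elim0, fun p => p.elim0⟩⟩⟩

theorem IsLinearEnumeration.forall_not_rel_last (hS : #S = m + 1) {u : Fin (m + 1) → α}
    (hu : IsLinearEnumeration r S u) : ∀ b ∈ S, ¬ r (u (Fin.last m)) b := by
  classical
  have himage : univ.image u = S :=
    eq_of_subset_of_card_le (image_subset_iff.2 fun p _ => hu.1 p)
      (by rw [hS, card_image_of_injective _ hu.2.1, card_univ, Fintype.card_fin])
  intro b hb hrel
  obtain ⟨q, -, rfl⟩ := mem_image.1 (himage ▸ hb)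
  exact (Fin.le_last q).not_gt (hu.2.2 _ _ hrel)

variable [DecidableEq α]

theorem IsLinearEnumeration.init {u : Fin (m + 1) → α} (hu : IsLinearEnumeration r S u) :
    IsLinearEnumeration r (S.erase (u (Fin.last m))) (Fin.init u) :=
  ⟨fun p => mem_erase.2 ⟨hu.2.1.ne (Fin.castSucc_lt_last p).ne, hu.1 _⟩,
    hu.2.1.comp (Fin.castSucc_injective m),
    fun _ _ h => Fin.castSucc_lt_castSucc_iff.1 (hu.2.2 _ _ h)⟩

theorem IsLinearEnumeration.snoc {a : α} (ha : a ∈ S) (hmax : ∀ b ∈ S, ¬ r a b)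
    {v : Fin m → α} (hv : IsLinearEnumeration r (S.erase a) v) :
    IsLinearEnumeration r S (Fin.snoc v a) := by
  have hva : ∀ p, v p ≠ a := fun p => ne_of_mem_erase (hv.1 p)
  refine ⟨Fin.lastCases (by simpa) fun p => by simpa using mem_of_mem_erase (hv.1 p), ?_, ?_⟩
  · intro p q
    cases p using Fin.lastCases <;> cases q using Fin.lastCases <;>
      simp [hv.2.1.eq_iff, hva, (hva _).symm]
  · intro p q
    cases p using Fin.lastCases <;> cases q using Fin.lastCases <;>
      simp only [Fin.snoc_last, Fin.snoc_castSucc, Fin.castSucc_lt_castSucc_iff,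
        Fin.castSucc_lt_last, lt_self_iff_false, implies_true] <;>
      first
      | exact hmax a ha
      | exact fun h => absurd h (hmax _ (mem_of_mem_erase (hv.1 _)))
      | exact hv.2.2 _ _

theorem numLinearEnumerations_succ [Fintype α] [DecidableRel r] (hS : #S = m + 1) :
    numLinearEnumerations r S (m + 1)
      = ∑ a ∈ S with ∀ b ∈ S, ¬ r a b, numLinearEnumerations r (S.erase a) m := by
  let e : {u : Fin (m + 1) → α // IsLinearEnumeration r S u}
      ≃ Σ a : S.filter (fun a => ∀ b ∈ S, ¬ r a b),
          {v : Fin m → α // IsLinearEnumeration r (S.erase a) v} :=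
    { toFun u := ⟨⟨u.1 (Fin.last m), mem_filter.2 ⟨u.2.1 _, u.2.forall_not_rel_last hS⟩⟩,
        ⟨Fin.init u.1, u.2.init⟩⟩
      invFun x := ⟨Fin.snoc x.2.1 x.1.1,
        x.2.2.snoc (mem_filter.1 x.1.2).1 (mem_filter.1 x.1.2).2⟩
      left_inv u := Subtype.ext (Fin.snoc_init_self u.1)
      right_inv x := Sigma.subtype_ext (Subtype.ext (Fin.snoc_last (α := fun _ => α) ..))
        (Fin.init_snoc (α := fun _ => α) ..) }
  rw [numLinearEnumerations, Nat.card_congr e, Nat.card_sigma]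
  exact sum_coe_sort _ fun a => numLinearEnumerations r (S.erase a) m

end LinearEnumeration

section Shapes

variable {d c : ℕ}

/-- The jump `a` (number `a.2` of path `a.1`) must come before the jump `b`. -/
def JumpPrecedes (a b : Fin d × Fin c) : Prop := a ≠ b ∧ b.1 ≤ a.1 ∧ a.2 ≤ b.2

instance : DecidableRel (@JumpPrecedes d c) :=
  fun _ _ => inferInstanceAs (Decidable (_ ∧ _ ∧ _))

def shapeCells (c : ℕ) (l : Fin d → ℕ) : Finset (Fin d × Fin c) := {a | (a.2 : ℕ) < l a.1}

def IsRemovableRow (l : Fin d → ℕ) (i : Fin d) : Prop := 0 < l i ∧ ∀ j < i, l j < l i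

instance (l : Fin d → ℕ) : DecidablePred (IsRemovableRow l) :=
  fun _ => inferInstanceAs (Decidable (_ ∧ _))

variable {l : Fin d → ℕ}

theorem card_shapeCells (hlc : ∀ i, l i ≤ c) : #(shapeCells c l) = ∑ i, l i := by
  simp only [shapeCells, card_filter, Fintype.sum_prod_type]
  exact sum_congr rfl fun i _ => by
    rw [← card_filter, Fin.card_filter_val_lt, min_eq_right (hlc i)]

theorem maximal_shapeCells_iff (hlc : ∀ i, l i ≤ c) {a : Fin d × Fin c} :
    (a ∈ shapeCells c l ∧ ∀ b ∈ shapeCells c l, ¬ JumpPrecedes a b)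
      ↔ IsRemovableRow l a.1 ∧ (a.2 : ℕ) + 1 = l a.1 := by
  obtain ⟨i, k⟩ := a
  simp only [shapeCells, mem_filter, mem_univ, true_and, JumpPrecedes, Prod.forall, ne_eq,
    Prod.mk.injEq, not_and, IsRemovableRow, Fin.le_def, Fin.ext_iff]
  constructor
  · rintro ⟨hk, hmax⟩
    have hlast : (k : ℕ) + 1 = l i := by
      by_contra hne
      exact hmax i ⟨k + 1, by have := hlc i; omega⟩ (by simp only; omega)
        (fun _ h => by simp at h) le_rfl (by simp)
    refine ⟨⟨by omega, fun j hj => ?_⟩, hlast⟩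
    by_contra hle
    exact hmax j k (by omega) (fun h => absurd h (Fin.val_ne_of_ne hj.ne')) (Fin.le_def.1 hj.le)
      le_rfl
  · rintro ⟨⟨-, hrow⟩, hlast⟩
    refine ⟨by omega, fun j k' hk' hne hji hkk' => ?_⟩
    rcases hji.lt_or_eq with hji | hji
    · have := hrow j hji
      omega
    · exact hne hji.symm (by rw [Fin.ext hji] at hk'; omega)

theorem shapeCells_erase {a : Fin d × Fin c} (ha : (a.2 : ℕ) + 1 = l a.1) :
    (shapeCells c l).erase a = shapeCells c (update l a.1 (l a.1 - 1)) := by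
  ext ⟨i, k⟩
  simp only [shapeCells, mem_erase, mem_filter, mem_univ, true_and]
  rcases eq_or_ne i a.1 with rfl | hi
  · simp only [update_self, ne_eq, Prod.ext_iff, true_and, Fin.ext_iff]
    omega
  · rw [update_of_ne hi]
    exact ⟨fun h => h.2, fun h => ⟨fun h' => hi (congrArg Prod.fst h'), h⟩⟩

theorem Monotone.update_sub_one (hl : Monotone l) {i : Fin d} (hi : IsRemovableRow l i) :
    Monotone (update l i (l i - 1)) := by
  intro a b hab
  simp only [update_apply]
  split_ifs with ha hb hb
  · exact le_rfl
  · subst ha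
    exact (Nat.sub_le _ _).trans (hl hab)
  · subst hb
    have := hi.2 a (lt_of_le_of_ne hab ha)
    omega
  · exact hl hab

theorem numLinearEnumerations_shapeCells_succ {m : ℕ} (hlc : ∀ i, l i ≤ c)
    (hm : ∑ i, l i = m + 1) :
    numLinearEnumerations JumpPrecedes (shapeCells c l) (m + 1)
      = ∑ i with IsRemovableRow l i,
          numLinearEnumerations JumpPrecedes (shapeCells c (update l i (l i - 1))) m := by
  rw [numLinearEnumerations_succ (by rw [card_shapeCells hlc, hm])]
  have hmax {a}
      (ha : a ∈ {a ∈ shapeCells c l | ∀ b ∈ shapeCells c l, ¬ JumpPrecedes a b}) :=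
    (maximal_shapeCells_iff hlc).1 (mem_filter.1 ha)
  refine sum_nbij Prod.fst (fun a ha => mem_filter.2 ⟨mem_univ _, (hmax ha).1⟩) ?_ ?_
    fun a ha => by rw [shapeCells_erase (hmax ha).2]
  · intro a ha b hb hab
    exact Prod.ext hab (Fin.ext (by have := (hmax ha).2; have := (hmax hb).2; rw [hab] at *; omega))
  · intro i hi
    have hi := (mem_filter.1 hi).2
    refine ⟨(i, ⟨l i - 1, by have := hlc i; have := hi.1; omega⟩), ?_, rfl⟩
    exact mem_filter.2 ((maximal_shapeCells_iff hlc).2 ⟨hi, by simp only; have := hi.1; omega⟩)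

end Shapes

section Frobenius

open Matrix

variable {d c : ℕ} {l : Fin d → ℕ}

/-- The first-column hook lengths of the shape `l`. -/
def beta (l : Fin d → ℕ) (i : Fin d) : ℕ := l i + i

theorem strictMono_beta (hl : Monotone l) : StrictMono (beta l) := fun i j hij => by
  have := hl hij.le
  have : (i : ℕ) < j := hij
  unfold beta
  omega

theorem sum_beta {m : ℕ} (hm : ∑ i, l i = m) : ∑ i, beta l i = m + d.choose 2 := by
  simp only [beta]
  rw [sum_add_distrib, hm, Fin.sum_univ_eq_sum_range (fun i => i) d, sum_range_id,
    Nat.choose_two_right]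

theorem prod_factorial_beta_update {i : Fin d} (hi : 0 < l i) :
    ∏ j, (beta l j).factorial
      = (∏ j, (beta (update l i (l i - 1)) j).factorial) * beta l i := by
  have hrest : ∏ j ∈ univ.erase i, (beta (update l i (l i - 1)) j).factorial
      = ∏ j ∈ univ.erase i, (beta l j).factorial :=
    prod_congr rfl fun j hj => by simp only [beta, update_of_ne (ne_of_mem_erase hj)]
  have hi' : beta (update l i (l i - 1)) i = beta l i - 1 := by simp only [beta, update_self]; omega
  rw [← mul_prod_erase univ _ (mem_univ i), ← mul_prod_erase univ _ (mem_univ i), hrest, hi',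
    ← Nat.mul_factorial_pred (show beta l i ≠ 0 by simp only [beta]; omega)]
  ring

theorem cast_beta_update {i : Fin d} (hi : 0 < l i) :
    (fun j => (beta (update l i (l i - 1)) j : ℚ))
      = update (fun j => (beta l j : ℚ)) i (beta l i - 1) := by
  ext j
  rcases eq_or_ne j i with rfl | hj
  · simp only [beta, update_self]
    rw [← Nat.sub_add_comm hi, Nat.cast_sub (by omega)]
    push_cast
    ring
  · simp [beta, update_of_ne hj]

theorem beta_eq_zero_or_exists_of_not_isRemovableRow (hl : Monotone l) {i : Fin d}
    (hi : ¬ IsRemovableRow l i) : beta l i = 0 ∨ ∃ j ≠ i, beta l j + 1 = beta l i := by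
  simp only [IsRemovableRow, not_and, not_forall, not_lt] at hi
  rcases Nat.eq_zero_or_pos (i : ℕ) with h0 | hpos
  · left
    have : l i = 0 := by
      by_contra hne
      obtain ⟨j, hj, -⟩ := hi (by omega)
      exact absurd (h0 ▸ hj : (j : ℕ) < 0) (Nat.not_lt_zero _)
    simp [beta, this, h0]
  · right
    let j : Fin d := ⟨i - 1, by omega⟩
    have hlj : l j = l i := by
      refine le_antisymm (hl (Fin.le_def.2 (by simp [j]))) ?_
      rcases Nat.eq_zero_or_pos (l i) with h | h
      · omega
      obtain ⟨j', hj', hle⟩ := hi h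
      exact hle.trans (hl (Fin.le_def.2 (by simp [j]; omega)))
    exact ⟨j, fun h => by simp [j, Fin.ext_iff] at h; omega, by simp [beta, hlj, j]; omega⟩

theorem mul_prod_factorial_beta_of_update {i : Fin d} (hl : Monotone l)
    (hi : IsRemovableRow l i) {N : ℚ} {m : ℕ}
    (h : N * (∏ j, (beta (update l i (l i - 1)) j).factorial : ℕ)
      = m.factorial * (vandermonde fun j => (beta (update l i (l i - 1)) j : ℚ)).det) :
    N * (∏ j, (beta l j).factorial : ℕ)
      = m.factorial * (vandermonde fun j => (beta l j : ℚ)).det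
        * ((beta l i : ℚ) * ∏ j ∈ univ.erase i,
            ((beta l i : ℚ) - 1 - beta l j) / ((beta l i : ℚ) - beta l j)) := by
  have hne : ∏ j ∈ univ.erase i, ((beta l i : ℚ) - beta l j) ≠ 0 :=
    prod_ne_zero_iff.2 fun j hj => sub_ne_zero.2 <| Nat.cast_injective.ne <|
      (strictMono_beta hl).injective.ne (ne_of_mem_erase hj).symm
  rw [cast_beta_update hi.1] at h
  rw [prod_factorial_beta_update hi.1, Nat.cast_mul, ← mul_assoc, h, prod_div_distrib]
  field_simp
  linear_combination (beta l i : ℚ) *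
    det_vandermonde_update_mul (fun j => (beta l j : ℚ)) i ((beta l i : ℚ) - 1)

theorem numLinearEnumerations_shapeCells_mul_prod_factorial (m : ℕ) (hl : Monotone l)
    (hlc : ∀ i, l i ≤ c) (hm : ∑ i, l i = m) :
    (numLinearEnumerations JumpPrecedes (shapeCells c l) m : ℚ)
        * (∏ i, (beta l i).factorial : ℕ)
      = m.factorial * (vandermonde fun i => (beta l i : ℚ)).det := by
  induction m generalizing l with
  | zero =>
    obtain rfl : l = 0 := funext fun i => sum_eq_zero_iff.1 hm i (mem_univ i)
    simpa [numLinearEnumerations_zero, beta] using (det_vandermonde_add_id (0 : ℚ)).symm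
  | succ m ih =>
    set x : Fin d → ℚ := fun i => beta l i
    have hterm (i : Fin d) (hi : IsRemovableRow l i) :
        (numLinearEnumerations JumpPrecedes (shapeCells c (update l i (l i - 1))) m : ℚ)
            * (∏ j, (beta l j).factorial : ℕ)
          = m.factorial * (vandermonde x).det
            * (x i * ∏ j ∈ univ.erase i, (x i - 1 - x j) / (x i - x j)) := by
      refine mul_prod_factorial_beta_of_update hl hi (ih (hl.update_sub_one hi)
        (fun j => by have := hlc i; have := hlc j; rw [update_apply]; split_ifs <;> omega) ?_)
      have := add_sum_erase univ l (mem_univ i)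
      rw [sum_update_of_mem (mem_univ i), sdiff_singleton_eq_erase]
      have := hi.1
      omega
    -- a row that is not removable contributes `0`: either `x i = 0` or `x j = x i - 1` for
    -- some `j ≠ i`
    have hremovable (i : Fin d)
        (hi : x i * ∏ j ∈ univ.erase i, (x i - 1 - x j) / (x i - x j) ≠ 0) :
        IsRemovableRow l i := by
      by_contra hnr
      rcases beta_eq_zero_or_exists_of_not_isRemovableRow hl hnr with h0 | ⟨j, hji, hj⟩
      · exact hi (by simp [x, h0])
      · refine hi (mul_eq_zero_of_right _ (prod_eq_zero (mem_erase.2 ⟨hji, mem_univ j⟩) ?_))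
        simp [x, ← hj]
    have hx : Injective x := Nat.cast_injective.comp (strictMono_beta hl).injective
    have hsum : ∑ i, x i = (m + 1 : ℕ) + (d.choose 2 : ℕ) := by
      simp only [x, ← Nat.cast_sum, sum_beta hm, Nat.cast_add]
    rw [numLinearEnumerations_shapeCells_succ hlc hm, Nat.cast_sum, sum_mul,
      sum_congr rfl fun i hi => hterm i (mem_filter.1 hi).2, ← mul_sum,
      sum_filter_of_ne fun i _ => hremovable i, sum_mul_prod_sub_one_div_sub hx.injOn, card_univ,
      Fintype.card_fin, hsum, Nat.factorial_succ]
    push_cast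
    ring

theorem numLinearEnumerations_univ_mul_prod_factorial :
    numLinearEnumerations JumpPrecedes (univ : Finset (Fin d × Fin c)) (d * c)
        * ∏ i : Fin d, (c + i).factorial
      = (d * c).factorial * ∏ i : Fin d, (i : ℕ).factorial := by
  have hcells : shapeCells c (fun _ : Fin d => c) = univ := by
    ext a
    simp [shapeCells]
  have h := numLinearEnumerations_shapeCells_mul_prod_factorial (d * c) (d := d) (c := c)
    (l := fun _ => c) monotone_const (fun _ => le_rfl) (by simp)
  simp only [hcells, beta, Nat.cast_add, det_vandermonde_add_id] at h
  exact_mod_cast h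

end Frobenius

theorem MeasureTheory.measure_eq_of_subset_of_subset_union_null {β : Type*} [MeasurableSpace β]
    {μ : Measure β} {s t N : Set β} (hts : t ⊆ s) (hst : s ⊆ t ∪ N) (hN : μ N = 0) :
    μ s = μ t :=
  le_antisymm ((measure_mono hst).trans ((measure_union_le t N).trans (by rw [hN, add_zero])))
    (measure_mono hts)

theorem MeasureTheory.measurePreserving_curry {ι κ X : Type*} [Fintype ι] [Fintype κ]
    [MeasurableSpace X] (μ : Measure X) [SigmaFinite μ] :
    MeasurePreserving (MeasurableEquiv.curry ι κ X) (Measure.pi fun _ => μ)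
      (Measure.pi fun _ => Measure.pi fun _ => μ) := by
  refine MeasurePreserving.symm _ ⟨(MeasurableEquiv.curry ι κ X).symm.measurable, ?_⟩
  refine (Measure.pi_eq fun s hs => ?_).symm
  have hpre : (MeasurableEquiv.curry ι κ X).symm ⁻¹' Set.univ.pi s
      = Set.univ.pi fun i => Set.univ.pi fun j => s (i, j) := by
    ext
    simp
  rw [Measure.map_apply (MeasurableEquiv.curry ι κ X).symm.measurable (.univ_pi hs), hpre,
    Measure.pi_pi]
  simp_rw [Measure.pi_pi]
  rw [Fintype.prod_prod_type]

section OrderPolytope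

variable {α : Type*} {n : ℕ}

def orderPolytope (r : α → α → Prop) (t : ℝ) : Set (α → ℝ) :=
  {x | (∀ a b, r a b → x a < x b) ∧ ∀ a, x a ∈ Set.Ioo 0 t}

def chamber (u : Fin n → α) (t : ℝ) : Set (α → ℝ) :=
  {x | StrictMono (x ∘ u) ∧ ∀ a, x a ∈ Set.Ioo 0 t}

theorem eq_of_mem_chamber {u v : Fin n → α} (hu : Bijective u) (hv : Bijective v) {t : ℝ}
    {x : α → ℝ} (hxu : x ∈ chamber u t) (hxv : x ∈ chamber v t) : u = v := by
  have hxx : x ∘ u = x ∘ v := (hxu.1.range_inj hxv.1).1 (by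
    rw [Set.range_comp, Set.range_comp, hu.2.range_eq, hv.2.range_eq])
  have hx : Injective x := hxu.1.injective.of_comp_right hu.2
  exact funext fun p => hx (congrFun hxx p)

variable [Fintype α]

theorem measurableSet_chamber (u : Fin n → α) (t : ℝ) : MeasurableSet (chamber u t) := by
  simp only [chamber, StrictMono, Set.ofPred_and, Set.ofPred_forall]
  exact .inter (.iInter fun p => .iInter fun q => .iInter fun _ =>
      measurableSet_lt (measurable_pi_apply (u p)) (measurable_pi_apply (u q)))
    (.iInter fun a => measurable_pi_apply a measurableSet_Ioo)

theorem volume_setOf_apply_eq_apply {a b : α} (hab : a ≠ b) :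
    volume {x : α → ℝ | x a = x b} = 0 := by
  classical
  let L : (α → ℝ) →ₗ[ℝ] ℝ :=
    (LinearMap.proj a : (α → ℝ) →ₗ[ℝ] ℝ) - LinearMap.proj b
  have hL : L ≠ 0 := fun h => by
    simpa [L, Pi.single_apply, hab.symm] using LinearMap.congr_fun h (Pi.single a 1)
  have hker : {x : α → ℝ | x a = x b} = LinearMap.ker L := by
    ext x
    simp [L, sub_eq_zero]
  rw [hker]
  exact Measure.addHaar_submodule _ _ fun h => hL (LinearMap.ker_eq_top.1 h)

theorem volume_setOf_not_injective : volume {x : α → ℝ | ¬ Injective x} = 0 := by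
  have hsub :
      {x : α → ℝ | ¬ Injective x} ⊆ ⋃ a, ⋃ b, ⋃ (_ : a ≠ b), {x | x a = x b} := by
    intro x hx
    simp only [Injective, not_forall] at hx
    obtain ⟨a, b, hxab, hab⟩ := hx
    exact Set.mem_iUnion₂.2 ⟨a, b, Set.mem_iUnion.2 ⟨hab, hxab⟩⟩
  exact measure_mono_null hsub <| measure_iUnion_null fun a => measure_iUnion_null fun b =>
    measure_iUnion_null volume_setOf_apply_eq_apply

theorem exists_bijective_strictMono_comp (hn : Fintype.card α = n) {x : α → ℝ}
    (hx : Injective x) : ∃ u : Fin n → α, Bijective u ∧ StrictMono (x ∘ u) := by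
  let e := (Fintype.equivFinOfCardEq hn).symm
  let σ := Tuple.sort (x ∘ e)
  exact ⟨e ∘ σ, e.bijective.comp σ.bijective,
    (Tuple.monotone_sort (x ∘ e)).strictMono_of_injective
      (hx.comp (e.injective.comp σ.injective))⟩

theorem volume_chamber_eq {u v : Fin n → α} (hu : Bijective u) (hv : Bijective v) (t : ℝ) :
    volume (chamber u t) = volume (chamber v t) := by
  let π : α ≃ α := (Equiv.ofBijective v hv).symm.trans (Equiv.ofBijective u hu)
  have hπ (p : Fin n) : π (v p) = u p := by simp [π]
  have hpre : MeasurableEquiv.arrowCongr' π.symm (.refl ℝ) ⁻¹' chamber v t = chamber u t := by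
    ext x
    have hx : MeasurableEquiv.arrowCongr' π.symm (.refl ℝ) x = x ∘ π := rfl
    simp only [chamber, Set.mem_preimage, Set.mem_ofPred_eq, hx]
    exact and_congr (iff_of_eq (congrArg StrictMono (funext fun p => congrArg x (hπ p))))
      (π.forall_congr_right (q := fun a => x a ∈ Set.Ioo 0 t))
  rw [← hpre,
    (volume_preserving_arrowCongr' π.symm (.refl ℝ) (.id volume)).measure_preimage_equiv]

theorem IsLinearEnumeration.bijective {r : α → α → Prop} (hn : Fintype.card α = n)
    {u : Fin n → α} (hu : IsLinearEnumeration r univ u) : Bijective u :=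
  (Fintype.bijective_iff_injective_and_card u).2 ⟨hu.2.1, by simp [hn]⟩

theorem volume_orderPolytope_eq_mul_volume_chamber (hn : Fintype.card α = n)
    (r : α → α → Prop) (t : ℝ) {u₀ : Fin n → α} (hu₀ : Bijective u₀) :
    volume (orderPolytope r t) = numLinearEnumerations r univ n * volume (chamber u₀ t) := by
  classical
  set L : Finset (Fin n → α) := {u | IsLinearEnumeration r univ u}
  have hL {u} (hu : u ∈ L) : IsLinearEnumeration r univ u := (mem_filter.1 hu).2
  have hcover : volume (orderPolytope r t) = volume (⋃ u ∈ L, chamber u t) := by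
    refine measure_eq_of_subset_of_subset_union_null (Set.iUnion₂_subset fun u hu x hx => ?_)
      (fun x hx => ?_) volume_setOf_not_injective
    · refine ⟨fun a b hab => ?_, hx.2⟩
      obtain ⟨p, rfl⟩ := ((hL hu).bijective hn).2 a
      obtain ⟨q, rfl⟩ := ((hL hu).bijective hn).2 b
      exact hx.1 ((hL hu).2.2 p q hab)
    · by_cases hinj : Injective x
      · obtain ⟨u, hu, hxu⟩ := exists_bijective_strictMono_comp hn hinj
        refine Or.inl (Set.mem_biUnion (x := u) (mem_filter.2 ⟨mem_univ _, ?_⟩) ⟨hxu, hx.2⟩)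
        exact ⟨fun _ => mem_univ _, hu.1, fun p q hpq => hxu.lt_iff_lt.1 (hx.1 _ _ hpq)⟩
      · exact Or.inr hinj
  have hdisj : (L : Set (Fin n → α)).PairwiseDisjoint (chamber · t) :=
    fun u hu v hv huv => Set.disjoint_left.2 fun x hxu hxv =>
      huv (eq_of_mem_chamber ((hL hu).bijective hn) ((hL hv).bijective hn) hxu hxv)
  rw [hcover, measure_biUnion_finset hdisj fun u _ => measurableSet_chamber u t,
    sum_congr rfl fun u hu => volume_chamber_eq ((hL hu).bijective hn) hu₀ t, sum_const,
    nsmul_eq_mul, numLinearEnumerations, Nat.card_eq_fintype_card, Fintype.card_subtype]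

theorem numLinearEnumerations_bot (hn : Fintype.card α = n) :
    numLinearEnumerations (⊥ : α → α → Prop) univ n = n.factorial := by
  rw [numLinearEnumerations, Nat.card_congr ((Equiv.subtypeEquivRight fun u => by
      simp [IsLinearEnumeration]).trans (Equiv.subtypeInjectiveEquivEmbedding _ _)),
    Nat.card_eq_fintype_card, Fintype.card_embedding_eq, Fintype.card_fin, hn,
    Nat.descFactorial_self]

theorem volume_chamber (hn : Fintype.card α = n) {u : Fin n → α} (hu : Bijective u) (t : ℝ) :
    volume (chamber u t) = ENNReal.ofReal t ^ n / n.factorial := by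
  have h := volume_orderPolytope_eq_mul_volume_chamber hn ⊥ t hu
  have hcube : orderPolytope (⊥ : α → α → Prop) t = Set.univ.pi fun _ => Set.Ioo 0 t := by
    ext x
    simp [orderPolytope]
  rw [hcube, volume_pi_pi, numLinearEnumerations_bot hn] at h
  simp only [Real.volume_Ioo, sub_zero, prod_const, card_univ, hn] at h
  rw [h, ENNReal.eq_div_iff (by simp [Nat.factorial_ne_zero]) (by simp)]

theorem volume_orderPolytope (hn : Fintype.card α = n) (r : α → α → Prop) (t : ℝ) :
    volume (orderPolytope r t)
      = numLinearEnumerations r univ n * (ENNReal.ofReal t ^ n / n.factorial) := by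
  let e := (Fintype.equivFinOfCardEq hn).symm
  rw [volume_orderPolytope_eq_mul_volume_chamber hn r t e.bijective,
    volume_chamber hn e.bijective t]

end OrderPolytope

section NonintersectingPaths

theorem le_of_card_le_card_of_monotone {c : ℕ} {f g : Fin c → ℝ} (hf : Monotone f)
    (hg : Monotone g) (k : Fin c)
    (h : Nat.card {j // f j ≤ f k} ≤ Nat.card {j // g j ≤ f k}) :
    g k ≤ f k := by
  by_contra! hlt
  have hf' : (k : ℕ) + 1 ≤ Nat.card {j // f j ≤ f k} := by
    rw [Nat.card_eq_fintype_card, Fintype.card_subtype, ← Fin.card_Iic]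
    exact card_le_card fun j hj => mem_filter.2 ⟨mem_univ _, hf (mem_Iic.1 hj)⟩
  have hg' : Nat.card {j // g j ≤ f k} ≤ k := by
    rw [Nat.card_eq_fintype_card, Fintype.card_subtype, ← Fin.card_Iio]
    exact card_le_card fun j hj => mem_Iio.2 (lt_of_not_ge fun hkj =>
      ((hlt.trans_le (hg hkj)).not_ge (mem_filter.1 hj).2))
  omega

variable {d M : ℕ} {t : ℝ}

theorem pathPos_lt_pathPos {c : ℕ} {τ : Fin d → Fin c → ℝ} {i i' : Fin d} (hii' : i < i')
    (h : ∀ k, τ i' k ≤ τ i k) (s : ℝ) : pathPos τ i s < pathPos τ i' s := by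
  have : Nat.card {j // τ i j ≤ s} ≤ Nat.card {j // τ i' j ≤ s} :=
    Nat.card_mono (Set.toFinite _) fun j (hj : τ i j ≤ s) => (h j).trans hj
  have : (i : ℕ) < i' := hii'
  unfold pathPos
  omega

theorem curry_mem_nonintersectingJumpTimes {x : Fin d × Fin (M - d) → ℝ}
    (hx : x ∈ orderPolytope JumpPrecedes t) : curry x ∈ nonintersectingJumpTimes d M t :=
  ⟨fun i k k' hkk' => hx.1 (i, k) (i, k') ⟨by simp [hkk'.ne], le_rfl, hkk'.le⟩,
    fun i k => hx.2 (i, k),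
    fun i i' hii' s _ => pathPos_lt_pathPos hii'
      (fun k => (hx.1 (i', k) (i, k) ⟨by simp [hii'.ne'], hii'.le, le_rfl⟩).le) s⟩

theorem antitone_apply_of_mem_nonintersectingJumpTimes {τ : Fin d → Fin (M - d) → ℝ}
    (hτ : τ ∈ nonintersectingJumpTimes d M t) (k : Fin (M - d)) : Antitone (τ · k) := by
  rcases d with _ | n
  · exact fun i => i.elim0
  refine Fin.antitone_iff_succ_le.2 fun i => le_of_card_le_card_of_monotone (hτ.1 _).monotone
    (hτ.1 _).monotone k ?_
  have := hτ.2.2 i.castSucc i.succ Fin.castSucc_lt_succ _ (hτ.2.1 i.castSucc k)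
  simp only [pathPos, Fin.val_succ, Fin.val_castSucc] at this
  omega

theorem mem_orderPolytope_of_curry_mem {x : Fin d × Fin (M - d) → ℝ}
    (hx : curry x ∈ nonintersectingJumpTimes d M t) (hinj : Injective x) :
    x ∈ orderPolytope JumpPrecedes t := by
  refine ⟨fun a b ⟨hab, hrow, hcol⟩ => lt_of_le_of_ne ?_ (hinj.ne hab),
    fun a => hx.2.1 a.1 a.2⟩
  exact (antitone_apply_of_mem_nonintersectingJumpTimes hx a.2 hrow).trans
    ((hx.1 b.1).monotone hcol)

theorem volume_nonintersectingJumpTimes_eq_volume_orderPolytope :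
    volume (nonintersectingJumpTimes d M t)
      = volume (orderPolytope (@JumpPrecedes d (M - d)) t) := by
  have hcurry : MeasurePreserving (MeasurableEquiv.curry (Fin d) (Fin (M - d)) ℝ) :=
    measurePreserving_curry volume
  rw [← hcurry.measure_preimage_equiv]
  exact measure_eq_of_subset_of_subset_union_null
    (fun x hx => curry_mem_nonintersectingJumpTimes hx)
    (fun x hx => (em (Injective x)).imp (mem_orderPolytope_of_curry_mem hx) id)
    volume_setOf_not_injective

end NonintersectingPaths

theorem volume_nonintersectingJumpTimes_general (d M : ℕ)
    (t : ℝ) (ht : 0 < t) :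
    volume (nonintersectingJumpTimes d M t)
      = ENNReal.ofReal (t ^ ((M - d) * d) *
          ∏ i ∈ Finset.range d, (Nat.factorial i : ℝ) / (Nat.factorial (M - d + i))) := by
  set c := M - d
  have hcount : (numLinearEnumerations (@JumpPrecedes d c) univ (d * c) : ℝ)
      * ∏ i ∈ range d, ((c + i).factorial : ℝ)
        = (d * c).factorial * ∏ i ∈ range d, (i.factorial : ℝ) := by
    rw [← Fin.prod_univ_eq_prod_range (fun i => ((c + i).factorial : ℝ)),
      ← Fin.prod_univ_eq_prod_range (fun i => (i.factorial : ℝ))]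
    exact_mod_cast numLinearEnumerations_univ_mul_prod_factorial
  rw [volume_nonintersectingJumpTimes_eq_volume_orderPolytope,
    volume_orderPolytope (n := d * c) (by simp [c]) JumpPrecedes t,
    ← ENNReal.ofReal_natCast, ← ENNReal.ofReal_natCast, ← ENNReal.ofReal_pow ht.le,
    ← ENNReal.ofReal_div_of_pos (by positivity), ← ENNReal.ofReal_mul (by positivity)]
  congr 1
  rw [prod_div_distrib, mul_comm c d]
  field_simp
  linear_combination hcount

/-- The Lebesgue measure of the set of jump-time vectors for `d` non-intersecting
up/right paths from `(0,i)` to `(t, M−d+i)`, `1 ≤ i ≤ d`, equals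
`t^{(M−d)d} · ∏_{i=0}^{d−1} i! / (M−d+i)!`. -/
theorem volume_nonintersectingJumpTimes (d M : ℕ) (hd : 0 < d) (hdM : d ≤ M)
    (t : ℝ) (ht : 0 < t) :
    volume (nonintersectingJumpTimes d M t)
      = ENNReal.ofReal (t ^ ((M - d) * d) *
          ∏ i ∈ Finset.range d, (Nat.factorial i : ℝ) / (Nat.factorial (M - d + i))) :=
  volume_nonintersectingJumpTimes_general d M t ht
end

section
/- Hermite three-term recurrence passes to the limit of Krawtchouk recurrences: if G_j^{(M)}(y) are functions satisfying G_0^{(M)} ≡ 1, G_1^{(M)}(y) = −2y, and the recurrence G_{j+1}^{(M)}(y) = −2y·G_j^{(M)}(y)·(1 − (j−2p)/√(2Mp(1−p))) − 2j·G_{j−1}^{(M)}(y)·((M−j+1)/M), and if G_j^{(M)}(y) = (−1)^j H_j(y) + O(M^{−1/2}) uniformly on y ∈ [−L,L], p ∈ [δ,1−δ] for indices up to j, then G_{j+1}^{(M)}(y) = (−1)^{j+1} H_{j+1}(y) + O(M^{−1/2}) uniformly, where H_j are the Hermite polynomials satisfying H_{j+1}(y) = 2y H_j(y) − 2j H_{j−1}(y).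 -/
/-- The physicists' Hermite polynomials: `H_0 = 1`, `H_1(y) = 2y`,
`H_{n+2}(y) = 2y·H_{n+1}(y) − 2(n+1)·H_n(y)`. -/
noncomputable def hermiteP : ℕ → ℝ → ℝ
  | 0, _ => 1
  | 1, y => 2 * y
  | (n + 2), y => 2 * y * hermiteP (n + 1) y - 2 * (n + 1) * hermiteP n y

lemma hermiteP_continuous : ∀ n, Continuous (hermiteP n)
  | 0 => by
    have h : hermiteP 0 = fun _ => (1:ℝ) := rfl
    rw [h]; exact continuous_const
  | 1 => by
    have h : hermiteP 1 = fun y => 2 * y := rfl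
    rw [h]; fun_prop
  | (n + 2) => by
    have h1 := hermiteP_continuous (n + 1)
    have h0 := hermiteP_continuous n
    have h : hermiteP (n + 2)
        = fun y => 2 * y * hermiteP (n + 1) y - 2 * (n + 1) * hermiteP n y := rfl
    rw [h]; fun_prop

lemma hermiteP_bdd (L : ℝ) (n : ℕ) : ∃ B, ∀ y ∈ Set.Icc (-L) L, |hermiteP n y| ≤ B := by
  obtain ⟨B, hB⟩ :=
    isCompact_Icc.exists_bound_of_continuousOn ((hermiteP_continuous n).continuousOn)
  exact ⟨B, fun y hy => by simpa [Real.norm_eq_abs] using hB y hy⟩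

lemma abs_sub'' (a b : ℝ) : |a - b| ≤ |a| + |b| := by
  simpa [sub_eq_add_neg] using abs_add_le a (-b)

set_option maxHeartbeats 1600000 in
/-- The Hermite three-term recurrence passes to the limit of the Krawtchouk recurrence:
if `G_0^{(M)} ≡ 1`, `G_1^{(M)}(y) = −2y`, `G` satisfies the stated recurrence, and
`G_k^{(M)}(y) = (−1)^k H_k(y) + O(M^{−1/2})` uniformly over `p ∈ [δ,1−δ]`, `y ∈ [−L,L]`
for all `k ≤ j`, then `G_{j+1}^{(M)}(y) = (−1)^{j+1} H_{j+1}(y) + O(M^{−1/2})` uniformly. -/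
theorem krawtchouk_to_hermite_step (δ L : ℝ) (hδ0 : 0 < δ) (hδ1 : δ < 1 / 2) (hL : 0 < L)
    (G : ℕ → ℕ → ℝ → ℝ → ℝ)
    (hG0 : ∀ M p y, G M 0 p y = 1)
    (hG1 : ∀ M p y, G M 1 p y = -2 * y)
    (hrec : ∀ M k p y, 1 ≤ k →
      G M (k + 1) p y
        = -2 * y * G M k p y * (1 - ((k : ℝ) - 2 * p) / Real.sqrt (2 * M * p * (1 - p)))
          - 2 * k * G M (k - 1) p y * (((M : ℝ) - k + 1) / M))
    (j : ℕ)
    (hind : ∃ C : ℝ, ∀ M : ℕ, 1 ≤ M → ∀ p ∈ Set.Icc δ (1 - δ), ∀ y ∈ Set.Icc (-L) L,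
      ∀ k ≤ j, |G M k p y - (-1 : ℝ) ^ k * hermiteP k y| ≤ C / Real.sqrt M) :
    ∃ C : ℝ, ∀ M : ℕ, 1 ≤ M → ∀ p ∈ Set.Icc δ (1 - δ), ∀ y ∈ Set.Icc (-L) L,
      |G M (j + 1) p y - (-1 : ℝ) ^ (j + 1) * hermiteP (j + 1) y| ≤ C / Real.sqrt M := by
  obtain ⟨C, hC⟩ := hind
  obtain _ | m := j
  · -- base case j = 0 : G M 1 p y = -2y = (-1)^1 H_1(y) exactly
    refine ⟨0, fun M hM p hp y hy => ?_⟩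
    have h1 : G M 1 p y = -2 * y := hG1 M p y
    have h2 : hermiteP 1 y = 2 * y := rfl
    have hsM0 : (0 : ℝ) < Real.sqrt M := Real.sqrt_pos.mpr (by exact_mod_cast hM)
    rw [h1, h2]
    have : -2 * y - (-1 : ℝ) ^ (0 + 1) * (2 * y) = 0 := by ring
    rw [this, abs_zero]
    positivity
  · -- inductive step with j = m + 1
    obtain ⟨B1, hB1⟩ := hermiteP_bdd L m
    obtain ⟨B2, hB2⟩ := hermiteP_bdd L (m + 1)
    set c := Real.sqrt (2 * δ * (1 - δ)) with hcdef
    have hc0 : 0 < c := Real.sqrt_pos.mpr (by nlinarith)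
    set K := ((m : ℝ) + 3) / c with hKdef
    have hK0 : 0 ≤ K := div_nonneg (by positivity) hc0.le
    -- final constant
    refine ⟨2 * L * C * (1 + K) + 2 * L * B2 * K + 2 * ((m : ℝ) + 1) * C * ((m : ℝ) + 1)
      + 2 * ((m : ℝ) + 1) * B1 * (m : ℝ), ?_⟩
    intro M hM p hp y hy
    obtain ⟨hp1, hp2⟩ := hp
    have hy1 := hy.1
    have hy2 := hy.2
    have hyL : |y| ≤ L := abs_le.mpr ⟨hy1, hy2⟩
    have hM1 : (1 : ℝ) ≤ (M : ℝ) := by exact_mod_cast hM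
    have hM0 : (0 : ℝ) < (M : ℝ) := by linarith
    set sM := Real.sqrt M with hsMdef
    have hsM1 : 1 ≤ sM := by
      rw [hsMdef, show (1:ℝ) = Real.sqrt 1 from Real.sqrt_one.symm]
      exact Real.sqrt_le_sqrt hM1
    have hsM0 : (0 : ℝ) < sM := by linarith
    have hsq : sM * sM = (M : ℝ) := by rw [hsMdef]; exact Real.mul_self_sqrt hM0.le
    have hMsM : sM ≤ (M : ℝ) := by nlinarith
    have hC0 : 0 ≤ C := by
      have h := hC M hM p ⟨hp1, hp2⟩ y ⟨hy1, hy2⟩ 0 (Nat.zero_le _)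
      have h2 : (0:ℝ) ≤ C / sM := le_trans (abs_nonneg _) h
      by_contra hcon
      push_neg at hcon
      exact absurd h2 (not_le.mpr (div_neg_of_neg_of_pos hcon hsM0))
    have hB10 : 0 ≤ B1 := le_trans (abs_nonneg _) (hB1 y ⟨hy1, hy2⟩)
    have hB20 : 0 ≤ B2 := le_trans (abs_nonneg _) (hB2 y ⟨hy1, hy2⟩)
    have hCs0 : (0:ℝ) ≤ C / sM := div_nonneg hC0 hsM0.le
    -- abbreviations
    set A1 := (-1:ℝ)^(m+1) * hermiteP (m+1) y with hA1def
    set A0 := (-1:ℝ)^m * hermiteP m y with hA0def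
    set d1 := G M (m+1) p y - A1 with hd1def
    set d0 := G M m p y - A0 with hd0def
    set e := (((m:ℝ)+1) - 2 * p) / Real.sqrt (2 * (M:ℝ) * p * (1 - p)) with hedef
    set r := (((M:ℝ) - ((m:ℝ)+1) + 1) / (M:ℝ)) with hrdef
    -- bounds from the induction hypothesis
    have hd1b : |d1| ≤ C / sM := hC M hM p ⟨hp1, hp2⟩ y ⟨hy1, hy2⟩ (m+1) le_rfl
    have hd0b : |d0| ≤ C / sM := hC M hM p ⟨hp1, hp2⟩ y ⟨hy1, hy2⟩ m (Nat.le_succ m)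
    have hA1b : |A1| ≤ B2 := by
      rw [hA1def, abs_mul, abs_pow, abs_neg, abs_one, one_pow, one_mul]
      exact hB2 y ⟨hy1, hy2⟩
    have hA0b : |A0| ≤ B1 := by
      rw [hA0def, abs_mul, abs_pow, abs_neg, abs_one, one_pow, one_mul]
      exact hB1 y ⟨hy1, hy2⟩
    -- bound on e
    have hpp : δ * (1 - δ) ≤ p * (1 - p) := by nlinarith
    have hsrt : c * sM ≤ Real.sqrt (2 * (M:ℝ) * p * (1 - p)) := by
      rw [hcdef, hsMdef, ← Real.sqrt_mul (by nlinarith : (0:ℝ) ≤ 2 * δ * (1 - δ))]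
      exact Real.sqrt_le_sqrt (by nlinarith)
    have hsrt0 : (0:ℝ) < Real.sqrt (2 * (M:ℝ) * p * (1 - p)) :=
      lt_of_lt_of_le (mul_pos hc0 hsM0) hsrt
    have heb : |e| ≤ K / sM := by
      rw [hedef, abs_div, abs_of_pos hsrt0]
      have hnum : |((m:ℝ)+1) - 2 * p| ≤ (m:ℝ) + 3 := by
        rw [abs_le]; constructor <;> nlinarith
      calc |((m:ℝ)+1) - 2 * p| / Real.sqrt (2 * (M:ℝ) * p * (1 - p))
          ≤ ((m:ℝ) + 3) / (c * sM) :=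
            div_le_div₀ (by positivity) hnum (mul_pos hc0 hsM0) hsrt
        _ = K / sM := by rw [hKdef, div_div]
    have h1e : |1 - e| ≤ 1 + K := by
      have hKs : K / sM ≤ K := by
        rw [div_le_iff₀ hsM0]; nlinarith
      calc |1 - e| ≤ |(1:ℝ)| + |e| := abs_sub'' 1 e
        _ ≤ 1 + K := by rw [abs_one]; linarith
    -- bounds on r
    have hrb : |r| ≤ (m:ℝ) + 1 := by
      rw [hrdef, abs_div, abs_of_pos hM0, div_le_iff₀ hM0]
      rw [abs_le]; constructor <;> nlinarith
    have hrb1 : |r - 1| ≤ (m:ℝ) / sM := by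
      have hre : r - 1 = -(m:ℝ) / (M:ℝ) := by rw [hrdef]; field_simp; ring
      rw [hre, abs_div, abs_neg, abs_of_nonneg (by positivity : (0:ℝ) ≤ (m:ℝ)),
        abs_of_pos hM0]
      exact div_le_div₀ (by positivity) le_rfl hsM0 hMsM
    -- the algebraic identity
    have hH : hermiteP (m+1+1) y = 2 * y * hermiteP (m+1) y - 2 * ((m:ℝ)+1) * hermiteP m y := by
      show 2 * y * hermiteP (m + 1) y - 2 * (↑m + 1) * hermiteP m y = _
      ring
    have hid : G M (m+1+1) p y - (-1:ℝ)^(m+1+1) * hermiteP (m+1+1) y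
        = -2 * y * d1 * (1 - e) + 2 * y * A1 * e
          - 2 * ((m:ℝ)+1) * d0 * r - 2 * ((m:ℝ)+1) * A0 * (r - 1) := by
      rw [hd1def, hd0def, hA1def, hA0def, hedef, hrdef,
        hrec M (m+1) p y (Nat.le_add_left 1 m), Nat.add_sub_cancel, hH]
      push_cast
      ring
    -- per-term bounds
    have ht1 : |(-2) * y * d1 * (1 - e)| ≤ (2 * L * C * (1 + K)) / sM := by
      have hexp : |(-2) * y * d1 * (1 - e)| = 2 * |y| * |d1| * |1 - e| := by
        rw [abs_mul, abs_mul, abs_mul]; norm_num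
      rw [hexp]
      have u1 : 2 * |y| ≤ 2 * L := by linarith
      have u2 : 2 * |y| * |d1| ≤ 2 * L * (C / sM) :=
        mul_le_mul u1 hd1b (abs_nonneg _) (by positivity)
      calc 2 * |y| * |d1| * |1 - e| ≤ 2 * L * (C / sM) * (1 + K) :=
            mul_le_mul u2 h1e (abs_nonneg _) (mul_nonneg (by positivity) hCs0)
        _ = (2 * L * C * (1 + K)) / sM := by ring
    have ht2 : |2 * y * A1 * e| ≤ (2 * L * B2 * K) / sM := by
      have hexp : |2 * y * A1 * e| = 2 * |y| * |A1| * |e| := by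
        rw [abs_mul, abs_mul, abs_mul]; norm_num
      rw [hexp]
      have u1 : 2 * |y| ≤ 2 * L := by linarith
      have u2 : 2 * |y| * |A1| ≤ 2 * L * B2 :=
        mul_le_mul u1 hA1b (abs_nonneg _) (by positivity)
      calc 2 * |y| * |A1| * |e| ≤ 2 * L * B2 * (K / sM) :=
            mul_le_mul u2 heb (abs_nonneg _) (mul_nonneg (by positivity) hB20)
        _ = (2 * L * B2 * K) / sM := by ring
    have ht3 : |2 * ((m:ℝ)+1) * d0 * r| ≤ (2 * ((m:ℝ)+1) * C * ((m:ℝ)+1)) / sM := by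
      have hexp : |2 * ((m:ℝ)+1) * d0 * r| = 2 * ((m:ℝ)+1) * |d0| * |r| := by
        rw [abs_mul, abs_mul, abs_of_nonneg (by positivity : (0:ℝ) ≤ 2 * ((m:ℝ)+1))]
      rw [hexp]
      have u2 : 2 * ((m:ℝ)+1) * |d0| ≤ 2 * ((m:ℝ)+1) * (C / sM) :=
        mul_le_mul_of_nonneg_left hd0b (by positivity)
      calc 2 * ((m:ℝ)+1) * |d0| * |r| ≤ 2 * ((m:ℝ)+1) * (C / sM) * ((m:ℝ)+1) :=
            mul_le_mul u2 hrb (abs_nonneg _) (mul_nonneg (by positivity) hCs0)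
        _ = (2 * ((m:ℝ)+1) * C * ((m:ℝ)+1)) / sM := by ring
    have ht4 : |2 * ((m:ℝ)+1) * A0 * (r - 1)| ≤ (2 * ((m:ℝ)+1) * B1 * (m:ℝ)) / sM := by
      have hexp : |2 * ((m:ℝ)+1) * A0 * (r - 1)| = 2 * ((m:ℝ)+1) * |A0| * |r - 1| := by
        rw [abs_mul, abs_mul, abs_of_nonneg (by positivity : (0:ℝ) ≤ 2 * ((m:ℝ)+1))]
      rw [hexp]
      have u2 : 2 * ((m:ℝ)+1) * |A0| ≤ 2 * ((m:ℝ)+1) * B1 :=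
        mul_le_mul_of_nonneg_left hA0b (by positivity)
      calc 2 * ((m:ℝ)+1) * |A0| * |r - 1| ≤ 2 * ((m:ℝ)+1) * B1 * ((m:ℝ) / sM) :=
            mul_le_mul u2 hrb1 (abs_nonneg _) (mul_nonneg (by positivity) hB10)
        _ = (2 * ((m:ℝ)+1) * B1 * (m:ℝ)) / sM := by ring
    -- put everything together
    rw [hid]
    have htri : |(-2) * y * d1 * (1 - e) + 2 * y * A1 * e
          - 2 * ((m:ℝ)+1) * d0 * r - 2 * ((m:ℝ)+1) * A0 * (r - 1)|
        ≤ |(-2) * y * d1 * (1 - e)| + |2 * y * A1 * e|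
          + |2 * ((m:ℝ)+1) * d0 * r| + |2 * ((m:ℝ)+1) * A0 * (r - 1)| := by
      have h1 := abs_sub'' ((-2) * y * d1 * (1 - e) + 2 * y * A1 * e
        - 2 * ((m:ℝ)+1) * d0 * r) (2 * ((m:ℝ)+1) * A0 * (r - 1))
      have h2 := abs_sub'' ((-2) * y * d1 * (1 - e) + 2 * y * A1 * e)
        (2 * ((m:ℝ)+1) * d0 * r)
      have h3 := abs_add_le ((-2) * y * d1 * (1 - e)) (2 * y * A1 * e)
      linarith
    have hsum : (2 * L * C * (1 + K)) / sM + (2 * L * B2 * K) / sM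
          + (2 * ((m:ℝ)+1) * C * ((m:ℝ)+1)) / sM + (2 * ((m:ℝ)+1) * B1 * (m:ℝ)) / sM
        = (2 * L * C * (1 + K) + 2 * L * B2 * K + 2 * ((m:ℝ)+1) * C * ((m:ℝ)+1)
          + 2 * ((m:ℝ)+1) * B1 * (m:ℝ)) / sM := by ring
    calc |(-2) * y * d1 * (1 - e) + 2 * y * A1 * e
          - 2 * ((m:ℝ)+1) * d0 * r - 2 * ((m:ℝ)+1) * A0 * (r - 1)|
        ≤ |(-2) * y * d1 * (1 - e)| + |2 * y * A1 * e|
          + |2 * ((m:ℝ)+1) * d0 * r| + |2 * ((m:ℝ)+1) * A0 * (r - 1)| := htri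
      _ ≤ (2 * L * C * (1 + K) + 2 * L * B2 * K + 2 * ((m:ℝ)+1) * C * ((m:ℝ)+1)
          + 2 * ((m:ℝ)+1) * B1 * (m:ℝ)) / sM := by
          rw [← hsum]; linarith
end
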